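/- Let L be a Boolean algebra, φ a faithful probability measure on L, and P, Q distinct atoms with φ(P ∨ Q) = 1. Then there exist no two distinct elements A, B ∈ L with φ(A ∧ B) > φ(A)·φ(B); i.e., there are no positively correlated pairs. -/

import Mathlib

/-!
Faithfulness and `φ (P ⊔ Q) = 1` force `P ⊔ Q = ⊤`, so every element other than `⊤` is `⊥` or an
atom. Hence two distinct elements either include `⊤`, where `φ (⊤ ⊓ B) = φ ⊤ * φ B` exactly, or
are disjoint, where `φ (A ⊓ B) = 0 ≤ φ A * φ B`.
-/

section FiniteAdditivity

variable {L : Type*} [BooleanAlgebra L] {φ : L → ℝ}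

theorem map_bot_of_additive (hadd : ∀ a b : L, Disjoint a b → φ (a ⊔ b) = φ a + φ b) :
    φ ⊥ = 0 := by
  have h := hadd ⊥ ⊥ disjoint_bot_left
  rw [bot_sup_eq] at h
  linarith

theorem map_add_map_compl_eq_one (htop : φ ⊤ = 1)
    (hadd : ∀ a b : L, Disjoint a b → φ (a ⊔ b) = φ a + φ b) (a : L) :
    φ a + φ aᶜ = 1 := by
  rw [← hadd a aᶜ disjoint_compl_right, sup_compl_eq_top, htop]

theorem eq_top_of_map_eq_one (htop : φ ⊤ = 1)
    (hadd : ∀ a b : L, Disjoint a b → φ (a ⊔ b) = φ a + φ b)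
    (hfaithful : ∀ a : L, φ a = 0 → a = ⊥) {a : L} (ha : φ a = 1) : a = ⊤ := by
  have hcompl : aᶜ = ⊥ := hfaithful _ (by linarith [map_add_map_compl_eq_one htop hadd a])
  exact compl_eq_bot.mp hcompl

theorem map_inf_le_mul_of_disjoint (hnonneg : ∀ a : L, 0 ≤ φ a)
    (hadd : ∀ a b : L, Disjoint a b → φ (a ⊔ b) = φ a + φ b) {a b : L} (hab : Disjoint a b) :
    φ (a ⊓ b) ≤ φ a * φ b := by
  rw [hab.eq_bot, map_bot_of_additive hadd]
  exact mul_nonneg (hnonneg a) (hnonneg b)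

end FiniteAdditivity

section TwoAtoms

variable {L : Type*} [BooleanAlgebra L]

theorem eq_bot_or_isAtom_of_sup_atoms_eq_top {P Q : L} (hP : IsAtom P) (hQ : IsAtom Q)
    (hPQ : P ⊔ Q = ⊤) {a : L} (ha : a ≠ ⊤) : a = ⊥ ∨ IsAtom a := by
  have hsplit : a = a ⊓ P ⊔ a ⊓ Q := by rw [← inf_sup_left, hPQ, inf_top_eq]
  rcases hP.le_iff.mp (inf_le_right : a ⊓ P ≤ P) with hAP | hAP <;>
    rcases hQ.le_iff.mp (inf_le_right : a ⊓ Q ≤ Q) with hAQ | hAQ <;>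
    rw [hAP, hAQ] at hsplit
  · exact .inl (by simpa using hsplit)
  · exact .inr (by simpa [hsplit] using hQ)
  · exact .inr (by simpa [hsplit] using hP)
  · exact absurd (hsplit.trans hPQ) ha

theorem disjoint_of_ne_of_eq_bot_or_isAtom {a b : L} (ha : a = ⊥ ∨ IsAtom a)
    (hb : b = ⊥ ∨ IsAtom b) (hab : a ≠ b) : Disjoint a b := by
  rcases ha with rfl | ha
  · exact disjoint_bot_left
  rcases hb with rfl | hb
  · exact disjoint_bot_right
  exact ha.disjoint_of_ne hb hab

end TwoAtoms

theorem no_correlation_of_two_atoms_full_general {L : Type*} [BooleanAlgebra L]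
    (φ : L → ℝ)
    (hnonneg : ∀ a : L, 0 ≤ φ a)
    (htop : φ ⊤ = 1)
    (hadd : ∀ a b : L, Disjoint a b → φ (a ⊔ b) = φ a + φ b)
    (hfaithful : ∀ a : L, φ a = 0 → a = ⊥)
    (P Q : L) (hP : IsAtom P) (hQ : IsAtom Q)
    (hsum : φ (P ⊔ Q) = 1) :
    ¬ ∃ A B : L, A ≠ B ∧ φ (A ⊓ B) > φ A * φ B := by
  rintro ⟨A, B, hne, hcorr⟩
  have hPQ : P ⊔ Q = ⊤ := eq_top_of_map_eq_one htop hadd hfaithful hsum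
  by_cases hA : A = ⊤
  · subst hA
    rw [top_inf_eq, htop, one_mul] at hcorr
    exact lt_irrefl _ hcorr
  by_cases hB : B = ⊤
  · subst hB
    rw [inf_top_eq, htop, mul_one] at hcorr
    exact lt_irrefl _ hcorr
  have hdisj : Disjoint A B := disjoint_of_ne_of_eq_bot_or_isAtom
    (eq_bot_or_isAtom_of_sup_atoms_eq_top hP hQ hPQ hA)
    (eq_bot_or_isAtom_of_sup_atoms_eq_top hP hQ hPQ hB) hne
  exact (map_inf_le_mul_of_disjoint hnonneg hadd hdisj).not_gt hcorr

/-- Boolean algebra, faithful φ, distinct atoms P, Q with φ(P ∨ Q) = 1: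
there are no two distinct positively correlated elements. -/
theorem no_correlation_of_two_atoms_full {L : Type*} [BooleanAlgebra L]
    (φ : L → ℝ)
    (hnonneg : ∀ a : L, 0 ≤ φ a)
    (htop : φ ⊤ = 1)
    (hadd : ∀ a b : L, Disjoint a b → φ (a ⊔ b) = φ a + φ b)
    (hfaithful : ∀ a : L, φ a = 0 → a = ⊥)
    (P Q : L) (hP : IsAtom P) (hQ : IsAtom Q) (hPQ : P ≠ Q)
    (hsum : φ (P ⊔ Q) = 1) :
    ¬ ∃ A B : L, A ≠ B ∧ φ (A ⊓ B) > φ A * φ B :=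
  no_correlation_of_two_atoms_full_general φ hnonneg htop hadd hfaithful P Q hP hQ hsum
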